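/- arXiv:1405.5827 — 2 statements merged into one kernel-verified Lean document; each statement's English description precedes it below -/
import Mathlib

section
/- Let v : 𝒫^n → Δ(C) be an anonymous randomized voting rule that is weakly strategy-proof and satisfies ε-super-weak unanimity, with m ≥ 3. Then for every pair of candidates x,y ∈ C and every j ∈ {0,…,n}, |v'(x,j) − v'(y,j)| ≤ 14mε. -/
open Finset

section VotingPrelims

variable (C : Type) [Fintype C] [DecidableEq C]

/-- A preference ordering over the subset `A` of candidates: a duplicate-free list
enumerating exactly the members of `A`, where earlier entries are more preferred. -/
def PrefOn (A : Finset C) : Type :=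
  {l : List C // l.Nodup ∧ l.toFinset = A}

/-- A (full) preference ordering on the whole candidate set. -/
abbrev Pref : Type := PrefOn C Finset.univ

variable {C}

noncomputable instance instFintypePrefOn (A : Finset C) : Fintype (PrefOn C A) :=
  Fintype.subtype A.toList.permutations.toFinset (by
    intro l
    rw [List.mem_toFinset, List.mem_permutations]
    constructor
    · intro h
      exact ⟨h.nodup_iff.mpr A.nodup_toList,
        by rw [List.toFinset_eq_of_perm _ _ h, Finset.toList_toFinset]⟩
    · rintro ⟨h1, h2⟩
      exact List.perm_of_nodup_nodup_toFinset_eq h1 A.nodup_toList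
        (by rw [h2, Finset.toList_toFinset]))

instance instDecidableEqPrefOn (A : Finset C) : DecidableEq (PrefOn C A) := fun P Q =>
  decidable_of_iff (P.1 = Q.1) Subtype.ext_iff.symm

/-- `P.pref x y` means that `x` is strictly preferred to `y` in `P`. -/
def PrefOn.pref {A : Finset C} (P : PrefOn C A) (x y : C) : Prop :=
  P.1.idxOf x < P.1.idxOf y

theorem Pref.mem_list (P : Pref C) (z : C) : z ∈ P.1 := by
  rw [← List.mem_toFinset, P.2.2]; exact Finset.mem_univ z

/-- The top (most preferred) candidate of a full preference ordering. -/
noncomputable def Pref.top [Nonempty C] (P : Pref C) : C :=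
  P.1.head?.getD (Classical.arbitrary C)

/-- The most preferred candidate of `S` according to the full preference `P`. -/
noncomputable def Pref.topOn [Nonempty C] (P : Pref C) (S : Finset C) : C :=
  (P.1.filter (fun z => decide (z ∈ S))).head?.getD (Classical.arbitrary C)

/-- The number of voters whose top choice is `x`. -/
noncomputable def topCount [Nonempty C] {n : ℕ} (P : Fin n → Pref C) (x : C) : ℕ :=
  (Finset.univ.filter fun i => (P i).top = x).card

/-- The number of voters whose most preferred candidate among `S` is `x`. -/
noncomputable def countTop [Nonempty C] {n : ℕ} (P : Fin n → Pref C) (S : Finset C)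
    (x : C) : ℕ :=
  (Finset.univ.filter fun i => (P i).topOn S = x).card

/-- The restriction of a full preference ordering to the subset `A`. -/
def Pref.restrictTo (P : Pref C) (A : Finset C) : PrefOn C A :=
  ⟨P.1.filter (fun z => decide (z ∈ A)), P.2.1.filter _, by
    ext z
    simp only [List.mem_toFinset, List.mem_filter, decide_eq_true_eq]
    exact ⟨fun h => h.2, fun h => ⟨Pref.mem_list P z, h⟩⟩⟩

/-- `d` is a probability distribution on the candidates. -/
def IsDist (d : C → ℝ) : Prop :=
  (∀ x, 0 ≤ d x) ∧ ∑ x, d x = 1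

/-- `d` is a probability distribution on the candidates, supported on `A`. -/
def IsDistOn (A : Finset C) (d : C → ℝ) : Prop :=
  IsDist d ∧ ∀ x ∉ A, d x = 0

/-- `v` is a (randomized) voting rule: it maps every profile to a distribution. -/
def IsVotingRule {A : Finset C} {n : ℕ} (v : (Fin n → PrefOn C A) → C → ℝ) : Prop :=
  ∀ P, IsDist (v P)

/-- `φ` is a belief, i.e. a probability distribution over preference orderings. -/
def IsBelief {A : Finset C} (φ : PrefOn C A → ℝ) : Prop :=
  (∀ P, 0 ≤ φ P) ∧ ∑ P, φ P = 1

/-- Anonymity: permuting the voters does not change the outcome distribution. -/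
def Anonymous {A : Finset C} {n : ℕ} (v : (Fin n → PrefOn C A) → C → ℝ) : Prop :=
  ∀ σ : Equiv.Perm (Fin n), ∀ P : Fin n → PrefOn C A, v (fun i => P (σ i)) = v P

/-- Utilities take values in `[0,1]`. -/
def Utility01 (u : C → ℝ) : Prop := ∀ x, 0 ≤ u x ∧ u x ≤ 1

/-- The utility function `u` is consistent with the preference ordering `P` on `A`. -/
def ConsistentOn (A : Finset C) (u : C → ℝ) (P : PrefOn C A) : Prop :=
  ∀ x ∈ A, ∀ y ∈ A, (u y < u x ↔ P.pref x y)

/-- The profile in which voter `i` reports `Pi` and the remaining voters report `R`. -/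
def combine {A : Finset C} {n : ℕ} (i : Fin n) (Pi : PrefOn C A)
    (R : {j : Fin n // j ≠ i} → PrefOn C A) : Fin n → PrefOn C A :=
  fun j => if h : j = i then Pi else R ⟨j, h⟩

/-- The expected utility of voter `i` when reporting `Pi`, where the remaining `n-1`
voters' preferences are drawn i.i.d. from the belief `φ`. -/
noncomputable def EU {A : Finset C} {n : ℕ} (v : (Fin n → PrefOn C A) → C → ℝ)
    (u : C → ℝ) (φ : PrefOn C A → ℝ) (i : Fin n) (Pi : PrefOn C A) : ℝ :=
  ∑ R : {j : Fin n // j ≠ i} → PrefOn C A,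
    (∏ j, φ (R j)) * ∑ x, v (combine i Pi R) x * u x

/-- Strategy-proofness with respect to a set `Φ` of (i.i.d.) beliefs. -/
def SPwrt {A : Finset C} {n : ℕ} (v : (Fin n → PrefOn C A) → C → ℝ)
    (Φ : Set (PrefOn C A → ℝ)) : Prop :=
  ∀ i : Fin n, ∀ Pi Pi' : PrefOn C A, ∀ φ ∈ Φ, IsBelief φ →
    ∀ u : C → ℝ, Utility01 u → ConsistentOn A u Pi →
      EU v u φ i Pi' ≤ EU v u φ i Pi

/-- Weak strategy-proofness: strategy-proofness w.r.t. all (i.i.d.) beliefs. -/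
def WeaklySP {n : ℕ} (v : (Fin n → Pref C) → C → ℝ) : Prop :=
  SPwrt v Set.univ

/-- `ε`-super-weak unanimity. -/
def SuperWeakUnanimity [Nonempty C] {n : ℕ} (v : (Fin n → Pref C) → C → ℝ) (ε : ℝ) : Prop :=
  ∀ x : C, ∃ P : Fin n → Pref C, (∀ i, (P i).top = x) ∧ 1 - ε ≤ v P x

/-- `ε`-strong unanimity. -/
def StrongUnanimity [Nonempty C] {n : ℕ} (v : (Fin n → Pref C) → C → ℝ) (ε : ℝ) : Prop :=
  ∀ x : C, ∀ P : Fin n → Pref C, (∀ i, (P i).top = x) → 1 - ε ≤ v P x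

/-- `ε`-Pareto efficiency. -/
def ParetoEff {n : ℕ} (v : (Fin n → Pref C) → C → ℝ) (ε : ℝ) : Prop :=
  ∀ x y : C, ∀ P : Fin n → Pref C, (∀ i, (P i).pref x y) → v P y ≤ ε

/-- An `α`-coarse belief: all probabilities are integer multiples of some `β ≥ α`. -/
def CoarseBelief {A : Finset C} (α : ℝ) (φ : PrefOn C A → ℝ) : Prop :=
  ∃ β : ℝ, α ≤ β ∧ ∀ P, ∃ k : ℤ, φ P = k * β

/-- An `α`-coarse utility function: any two utilities are equal or at least `α` apart. -/
def CoarseUtility (α : ℝ) (u : C → ℝ) : Prop :=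
  ∀ x y : C, u x = u y ∨ α ≤ |u x - u y|

/-- Large-scale `ε`-strategy-proofness w.r.t. coarse i.i.d. beliefs, with rate `p`. -/
def LargeScaleSP (v : (n : ℕ) → (Fin n → Pref C) → C → ℝ) (ε : ℕ → ℝ) (p : ℝ → ℝ) : Prop :=
  ∀ α : ℝ, 0 < α → ∀ n : ℕ, p (1 / α) ≤ (n : ℝ) →
    ∀ i : Fin n, ∀ Pi Pi' : Pref C, ∀ φ : Pref C → ℝ, IsBelief φ → CoarseBelief α φ →
      ∀ u : C → ℝ, Utility01 u → CoarseUtility α u → ConsistentOn Finset.univ u Pi →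
        EU (v n) u φ i Pi' - ε n ≤ EU (v n) u φ i Pi

/-- The restriction of a belief to the candidate subset `A`. -/
noncomputable def beliefRestrict (φ : Pref C → ℝ) (A : Finset C) : PrefOn C A → ℝ :=
  fun Q => ∑ P : Pref C, if P.restrictTo A = Q then φ P else 0

/-- The punishing voting rule: choose a uniform voter, then her `j`-th ranked candidate
with probability proportional to `m - j`. -/
noncomputable def vPunish (n : ℕ) (P : Fin n → Pref C) (x : C) : ℝ :=
  (1 / (n : ℝ)) * ∑ i : Fin n,
    (((Fintype.card C : ℝ) - ((P i).1.idxOf x + 1)) /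
      (∑ ℓ ∈ Finset.range (Fintype.card C), ((Fintype.card C : ℝ) - ((ℓ : ℝ) + 1))))

end VotingPrelims

section MorePrelims

variable {C : Type} [Fintype C] [DecidableEq C]

/-- `x` is directly above `y` in the preference ordering `P`. -/
def DirectlyAbove (P : Pref C) (x y : C) : Prop :=
  P.pref x y ∧ ∀ z : C, z ≠ x → z ≠ y → (P.pref z x ↔ P.pref z y)

/-- The preference obtained from `P` by exchanging the positions of `x` and `y`. -/
def Pref.swapC (P : Pref C) (x y : C) : Pref C :=
  ⟨P.1.map (Equiv.swap x y), P.2.1.map (Equiv.injective _), by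
    apply Finset.eq_univ_iff_forall.mpr
    intro z
    rw [List.mem_toFinset, List.mem_map]
    exact ⟨Equiv.swap x y z, Pref.mem_list P _, Equiv.swap_apply_self x y z⟩⟩

/-- Pairwise responsiveness. -/
def PairwiseResponsive {n : ℕ} (v : (Fin n → Pref C) → C → ℝ) : Prop :=
  ∀ P : Fin n → Pref C, ∀ i : Fin n, ∀ x y : C, DirectlyAbove (P i) x y →
    ∀ z : C, z ≠ x → z ≠ y →
      v (Function.update P i ((P i).swapC x y)) z = v P z

/-- Pairwise isolation. -/
def PairwiseIsolated {n : ℕ} (v : (Fin n → Pref C) → C → ℝ) : Prop :=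
  ∀ x y : C, ∀ i : Fin n, ∀ P P' : Fin n → Pref C,
    DirectlyAbove (P i) x y → P' i = P i →
    (∀ j : Fin n, (P j).pref x y ↔ (P' j).pref x y) →
      v (Function.update P' i ((P' i).swapC x y)) y - v P' y
        = v (Function.update P i ((P i).swapC x y)) y - v P y

/-- The ordering that puts `x` on top, with the rest ordered as in `a`. -/
def prefTopList (a : Pref C) (x : C) : Pref C :=
  ⟨x :: a.1.erase x, by
    rw [List.nodup_cons]
    exact ⟨a.2.1.not_mem_erase, a.2.1.erase x⟩, by
    apply Finset.eq_univ_iff_forall.mpr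
    intro z
    rw [List.mem_toFinset, List.mem_cons]
    by_cases hz : z = x
    · exact Or.inl hz
    · exact Or.inr ((List.mem_erase_of_ne hz).mpr (Pref.mem_list a z))⟩

/-- The ordering `a` with `x` moved to the bottom. -/
def prefBotList (a : Pref C) (x : C) : Pref C :=
  ⟨a.1.erase x ++ [x], by
    rw [List.nodup_append]
    exact ⟨a.2.1.erase x, List.nodup_singleton x,
      fun z hz b hb hzb => absurd hz (by
        rw [hzb, List.mem_singleton.mp hb]; exact a.2.1.not_mem_erase)⟩, by
    apply Finset.eq_univ_iff_forall.mpr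
    intro z
    rw [List.mem_toFinset, List.mem_append, List.mem_singleton]
    by_cases hz : z = x
    · exact Or.inr hz
    · exact Or.inl ((List.mem_erase_of_ne hz).mpr (Pref.mem_list a z))⟩

/-- The profile `P⃗^{x,j}`: the first `j` voters rank `x` first followed by the remaining
candidates in the order `a`; the remaining voters use `a` with `x` moved to the bottom. -/
def profileXJ (a : Pref C) (x : C) (j : ℕ) (n : ℕ) : Fin n → Pref C :=
  fun i => if (i : ℕ) < j then prefTopList a x else prefBotList a x

/-- `v'(x,j)`: the selection probability of `x` on the profile `P⃗^{x,j}`. -/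
def vPrime {n : ℕ} (v : (Fin n → Pref C) → C → ℝ) (a : Pref C) (x : C) (j : ℕ) : ℝ :=
  v (profileXJ a x j n) x

/-- One round of repeated-plurality elimination with margin `T`: keep exactly the
candidates of `S` whose top-choice count is within `T` of the highest count. -/
noncomputable def plStep [Nonempty C] {n : ℕ} (P : Fin n → Pref C) (T : ℝ) (S : Finset C) :
    Finset C :=
  S.filter (fun x => ((S.sup (countTop P S) : ℕ) : ℝ) ≤ (countTop P S x : ℝ) + T)

/-- The set of remaining candidates after repeated-plurality elimination. -/
noncomputable def plFinal [Nonempty C] {n : ℕ} (P : Fin n → Pref C) (T : ℝ) : Finset C :=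
  (fun S => plStep P T S)^[Fintype.card C] Finset.univ

/-- The plurality winner among `S`, with ties broken by `tb`. -/
noncomputable def pluralityWinner [Nonempty C] {n : ℕ} (tb : Finset C → C)
    (P : Fin n → Pref C) (S : Finset C) : C :=
  tb (S.filter (fun x => countTop P S x = S.sup (countTop P S)))

/-- Repeated Plurality Elimination + Plurality Selection. -/
noncomputable def vPl [Nonempty C] (δ : ℝ) (tb : Finset C → C) (n : ℕ)
    (P : Fin n → Pref C) (x : C) : ℝ :=
  if x = pluralityWinner tb P (plFinal P ((n : ℝ) ^ ((1 : ℝ) / 2 + δ))) then 1 else 0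

/-- One round of approximate instant-runoff elimination with margin `T`: eliminate the
candidates of `S` whose top-choice count is within `T` of the least count, unless this
would eliminate everyone. -/
noncomputable def irvStep [Nonempty C] {n : ℕ} (P : Fin n → Pref C) (T : ℝ) (S : Finset C) :
    Finset C :=
  if h : S.Nonempty then
    let E := S.filter (fun x =>
      (countTop P S x : ℝ) ≤ (((S.image (countTop P S)).min' (h.image _) : ℕ) : ℝ) + T)
    if E = S then S else S \ E
  else S

/-- The set of remaining candidates after approximate instant-runoff elimination. -/
noncomputable def irvFinal [Nonempty C] {n : ℕ} (P : Fin n → Pref C) (T : ℝ) : Finset C :=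
  (fun S => irvStep P T S)^[Fintype.card C] Finset.univ

/-- Approximate Instant-Runoff Voting. -/
noncomputable def vIrv [Nonempty C] (δ : ℝ) (tb : Finset C → C) (n : ℕ)
    (P : Fin n → Pref C) (x : C) : ℝ :=
  if x = pluralityWinner tb P (irvFinal P ((n : ℝ) ^ ((1 : ℝ) / 2 + δ))) then 1 else 0

/-- The position (0-indexed rank) of candidate `x` in the ordering `P`. -/
def Pref.rank (P : Pref C) (x : C) : Fin (Fintype.card C) :=
  ⟨P.1.idxOf x, by
    have hx : x ∈ P.1 := Pref.mem_list P x
    have hlen : P.1.length = Fintype.card C := by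
      rw [← List.toFinset_card_of_nodup P.2.1, P.2.2, Finset.card_univ]
    rw [← hlen]
    exact List.idxOf_lt_length_iff.mpr hx⟩

/-- The score of candidate `x` under the positional scoring rule with points vector `pv`. -/
def scoreOf (pv : Fin (Fintype.card C) → ℕ) {n : ℕ} (P : Fin n → Pref C) (x : C) : ℕ :=
  ∑ i : Fin n, pv ((P i).rank x)

/-- Scoring Rule Elimination + Input-Independent Selection. -/
noncomputable def vScore (δ : ℝ) (pv : Fin (Fintype.card C) → ℕ) (sel : Finset C → C → ℝ)
    (n : ℕ) (P : Fin n → Pref C) (x : C) : ℝ :=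
  sel (Finset.univ.filter (fun y =>
    ((Finset.univ.sup (scoreOf pv P) : ℕ) : ℝ) ≤ (scoreOf pv P y : ℝ) + (n : ℝ) ^ ((1 : ℝ) / 2 + δ))) x

end MorePrelims

/-!
Testing weak strategy-proofness against utilities close to the indicator of the top-`k` set of
the truthful ordering shows that a voter cannot change the expected probability of that set by a
report with the same top-`k` set. This holds for every i.i.d. belief about the others, so by
anonymity an inclusion–exclusion over empirical beliefs makes it an exact identity at every
profile.

With this invariance, `v'(x,j)` and `v'(y,j)` are the probabilities of `x` and `y` in the profiles
`j × (x y ρ) + (n-j) × (ρ y x)` and `j × (y x ρ) + (n-j) × (ρ x y)`, which give `{x, y}` the same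
total probability. The invariance also upgrades super-weak to strong unanimity, and comparing each
of these profiles with profiles in which `x`, resp. the first candidate of `ρ`, is unanimously on
top shows that the second candidate of its first block gets probability at most `2ε`. Hence
`|v'(x,j) - v'(y,j)| ≤ 2ε`.
-/

section Polarization

variable {J ι : Type} [Fintype J] [DecidableEq J]

theorem sum_superset_neg_one_pow (T : Finset J) :
    ∑ s : Finset J, (if T ⊆ s then (-1 : ℝ) ^ (Fintype.card J - #s) else 0)
      = if T = univ then 1 else 0 := by
  rw [← Equiv.sum_comp (compl_involutive.toPerm _)]
  have hcard (s : Finset J) : Fintype.card J - #sᶜ = #s := by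
    rw [card_compl]; have := card_le_univ s; omega
  simp only [Function.Involutive.coe_toPerm, hcard, subset_compl_comm (s := T)]
  rw [← sum_filter, filter_subset_univ]
  have := congrArg (Int.cast : ℤ → ℝ) (sum_powerset_neg_one_pow_card (x := Tᶜ))
  push_cast at this
  simpa [compl_eq_empty_iff] using this

theorem sum_neg_one_pow_mul_sum_piFinset (f : (J → J) → ℝ) :
    ∑ s : Finset J, (-1 : ℝ) ^ (Fintype.card J - #s) * ∑ p ∈ Fintype.piFinset (fun _ : J => s), f p
      = ∑ p with Function.Surjective p, f p := by
  have hpi (s : Finset J) :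
      Fintype.piFinset (fun _ : J => s) = ({p | univ.image p ⊆ s} : Finset (J → J)) := by
    ext p; simp [Fintype.mem_piFinset, image_subset_iff]
  have himage (p : J → J) : univ.image p = univ ↔ Function.Surjective p := by
    simp [eq_univ_iff_forall, Function.Surjective]
  simp only [hpi, sum_filter, mul_sum]
  rw [sum_comm]
  refine sum_congr rfl fun p _ => ?_
  simp only [mul_ite, mul_zero, ← ite_zero_mul, ← sum_mul, sum_superset_neg_one_pow, himage]
  simp

variable [Fintype ι]

theorem sum_prod_card_filter_mul [DecidableEq ι] (s : Finset J) (R₀ : J → ι) (g : (J → ι) → ℝ) :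
    ∑ R : J → ι, (∏ j, (#{l ∈ s | R₀ l = R j} : ℝ)) * g R
      = ∑ p ∈ Fintype.piFinset (fun _ : J => s), g (R₀ ∘ p) := by
  have hfiber (R : J → ι) : {p ∈ Fintype.piFinset (fun _ : J => s) | R₀ ∘ p = R}
      = Fintype.piFinset (fun j => {l ∈ s | R₀ l = R j}) := by
    ext p; simp [Fintype.mem_piFinset, funext_iff, forall_and]
  rw [← sum_fiberwise_of_maps_to (t := (univ : Finset (J → ι)))
    (g := fun p : J → J => R₀ ∘ p) (fun _ _ => mem_univ _)]
  refine sum_congr rfl fun R _ => ?_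
  rw [sum_congr rfl fun p hp => by rw [(mem_filter.1 hp).2], sum_const, hfiber,
    Fintype.card_piFinset, nsmul_eq_mul]
  push_cast; rfl

theorem sum_prod_mul_eq_zero_of_nonneg {g : (J → ι) → ℝ}
    (hF : ∀ φ : ι → ℝ, (∀ q, 0 ≤ φ q) → ∑ q, φ q = 1 → ∑ R : J → ι, (∏ j, φ (R j)) * g R = 0)
    (w : ι → ℝ) (hw : ∀ q, 0 ≤ w q) (hpos : 0 < ∑ q, w q) :
    ∑ R : J → ι, (∏ j, w (R j)) * g R = 0 := by
  have h := hF (fun q => w q / ∑ q, w q) (fun q => div_nonneg (hw q) hpos.le)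
    (by rw [← sum_div, div_self hpos.ne'])
  simp only [prod_div_distrib, prod_const, div_mul_eq_mul_div, ← sum_div] at h
  exact (div_eq_zero_iff.1 h).resolve_right (pow_ne_zero _ hpos.ne')

/-- `∑ R, (∏ j, φ (R j)) * g R` is the expectation of `g` on `|J|` i.i.d. samples from `φ`. -/
theorem eq_zero_of_forall_sum_prod_mul_eq_zero [DecidableEq ι] [Nonempty ι] (g : (J → ι) → ℝ)
    (R₀ : J → ι)    (hsym : ∀ σ : Equiv.Perm J, g (R₀ ∘ σ) = g R₀)
    (hF : ∀ φ : ι → ℝ, (∀ q, 0 ≤ φ q) → ∑ q, φ q = 1 → ∑ R : J → ι, (∏ j, φ (R j)) * g R = 0) :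
    g R₀ = 0 := by
  rcases isEmpty_or_nonempty J with hJ | hJ
  · have hq := hF (fun _ => (Fintype.card ι : ℝ)⁻¹) (fun _ => by positivity)
      (by simp [Fintype.card_ne_zero])
    simpa [Subsingleton.elim _ R₀] using hq
  -- the empirical distribution of `R₀` on each `s` turns `hF` into a counting identity
  have hempirical (s : Finset J) : ∑ p ∈ Fintype.piFinset (fun _ : J => s), g (R₀ ∘ p) = 0 := by
    rcases s.eq_empty_or_nonempty with rfl | hs
    · simp
    rw [← sum_prod_card_filter_mul]
    refine sum_prod_mul_eq_zero_of_nonneg hF (fun q => (#{l ∈ s | R₀ l = q} : ℝ))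
      (fun _ => Nat.cast_nonneg _) ?_
    rw [← Nat.cast_sum, ← card_eq_sum_card_fiberwise (fun _ _ => mem_univ _)]
    exact_mod_cast hs.card_pos
  have hsurj : ∑ p : J → J with Function.Surjective p, g (R₀ ∘ p)
      = #{p : J → J | Function.Surjective p} * g R₀ := by
    rw [← nsmul_eq_mul, ← sum_const]
    refine sum_congr rfl fun p hp => ?_
    exact hsym (Equiv.ofBijective p ((mem_filter.1 hp).2.bijective_of_finite))
  have hpos : (0 : ℝ) < #{p : J → J | Function.Surjective p} := by
    exact_mod_cast card_pos.2 ⟨id, by simp [Function.surjective_id]⟩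
  rw [← sum_neg_one_pow_mul_sum_piFinset] at hsurj
  simp only [hempirical, mul_zero, sum_const_zero] at hsurj
  exact (mul_eq_zero.1 hsurj.symm).resolve_left hpos.ne'

end Polarization

section Preferences

variable {C : Type} [Fintype C] [DecidableEq C]

instance Pref.instNonempty : Nonempty (Pref C) :=
  ⟨⟨univ.toList, nodup_toList _, by simp⟩⟩

theorem Pref.exists_eq_of_perm (Q : Pref C) {l : List C} (h : l.Perm Q.1) :
    ∃ Q' : Pref C, Q'.1 = l :=
  ⟨⟨l, h.nodup_iff.2 Q.2.1, (List.toFinset_eq_of_perm _ _ h).trans Q.2.2⟩, rfl⟩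

theorem Pref.sum_eq_sum_map (Q : Pref C) (f : C → ℝ) : ∑ z, f z = (Q.1.map f).sum := by
  rw [← List.sum_toFinset f Q.2.1, Q.2.2]

theorem Pref.top_eq_of_eq_cons [Nonempty C] {Q : Pref C} {x : C} {l : List C}
    (h : Q.1 = x :: l) : Q.top = x := by
  simp [Pref.top, h]

theorem exists_pref_eq_cons_cons (hm : 3 ≤ Fintype.card C) {x y : C} (hxy : x ≠ y) :
    ∃ (Q : Pref C) (ρ : List C), ρ ≠ [] ∧ Q.1 = x :: y :: ρ := by
  set ρ := ((univ.erase x).erase y).toList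
  refine ⟨⟨x :: y :: ρ, ?_, ?_⟩, ρ, ?_, rfl⟩
  · simp [ρ, hxy, nodup_toList]
  · ext z; by_cases hx : z = x <;> by_cases hy : z = y <;> simp [ρ, hx, hy]
  · rw [Ne, ← List.length_eq_zero_iff, length_toList, card_erase_of_mem (by simp [hxy.symm]),
      card_erase_of_mem (mem_univ x), card_univ]
    omega

def IsPrefixSet (U : Finset C) (Q : Pref C) : Prop :=
  ∃ k, U = (Q.1.take k).toFinset

theorem isPrefixSet_of_eq_append {Q : Pref C} {l l' : List C} (h : Q.1 = l ++ l') :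
    IsPrefixSet l.toFinset Q :=
  ⟨l.length, by rw [h, List.take_left]⟩

theorem isPrefixSet_singleton_of_eq_cons {Q : Pref C} {x : C} {l : List C}
    (h : Q.1 = x :: l) : IsPrefixSet {x} Q := by
  simpa using isPrefixSet_of_eq_append (l := [x]) h

theorem isPrefixSet_top [Nonempty C] (Q : Pref C) : IsPrefixSet {Q.top} Q := by
  obtain ⟨x, l, h⟩ :=
    List.exists_cons_of_ne_nil (List.ne_nil_of_mem (Q.mem_list (Classical.arbitrary C)))
  rw [Pref.top_eq_of_eq_cons h]
  exact isPrefixSet_singleton_of_eq_cons h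

theorem compl_toFinset_of_eq_append {Q : Pref C} {l l' : List C} (h : Q.1 = l ++ l') :
    (l.toFinset)ᶜ = l'.toFinset := by
  have hdisj := List.disjoint_of_nodup_append (h ▸ Q.2.1)
  ext z
  have hz := Q.mem_list z
  rw [h, List.mem_append] at hz
  simp only [mem_compl, List.mem_toFinset]
  exact ⟨hz.resolve_left, fun hz' hzl => hdisj hzl hz'⟩

theorem isPrefixSet_compl_singleton_of_eq_append {Q : Pref C} {x : C} {l : List C}
    (h : Q.1 = l ++ [x]) : IsPrefixSet {x}ᶜ Q := by
  have hl : (l.toFinset)ᶜ = {x} := by simpa using compl_toFinset_of_eq_append h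
  rw [← hl, compl_compl]
  exact isPrefixSet_of_eq_append h

end Preferences

section ExpectedUtility

variable {C : Type} [DecidableEq C] {A : Finset C} {n : ℕ}

theorem EU_linear_comb [Fintype C] {v : (Fin n → PrefOn C A) → C → ℝ} (a b : ℝ) (f g : C → ℝ)
    (φ : PrefOn C A → ℝ) (i : Fin n) (P : PrefOn C A) :
    EU v (fun z => a * f z + b * g z) φ i P = a * EU v f φ i P + b * EU v g φ i P := by
  simp only [EU, mul_sum, ← sum_add_distrib]
  exact sum_congr rfl fun R _ => sum_congr rfl fun z _ => by ring

theorem EU_indicator [Fintype C] {v : (Fin n → PrefOn C A) → C → ℝ} (U : Finset C)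
    (φ : PrefOn C A → ℝ) (i : Fin n) (P : PrefOn C A) :
    EU v (fun z => if z ∈ U then 1 else 0) φ i P
      = ∑ R, (∏ j, φ (R j)) * ∑ z ∈ U, v (combine i P R) z := by
  simp [EU, mul_ite, sum_ite_mem]

theorem combine_comp_perm (i : Fin n) (Q : PrefOn C A) (R : {j : Fin n // j ≠ i} → PrefOn C A)
    (σ : Equiv.Perm {j : Fin n // j ≠ i}) :
    combine i Q (R ∘ σ) = fun l => combine i Q R (Equiv.Perm.ofSubtype σ l) := by
  funext l
  by_cases hl : l = i
  · subst hl
    rw [Equiv.Perm.ofSubtype_apply_of_not_mem σ (by simp)]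
    simp [combine]
  · rw [Equiv.Perm.ofSubtype_apply_of_mem σ hl]
    simp [combine, hl, (σ ⟨l, hl⟩).2]

theorem combine_self (i : Fin n) (P : Fin n → PrefOn C A) :
    combine i (P i) (fun j : {j : Fin n // j ≠ i} => P j) = P := by
  funext l
  by_cases hl : l = i
  · subst hl; simp [combine]
  · simp [combine, hl]

theorem combine_eq_update (i : Fin n) (Q : PrefOn C A) (P : Fin n → PrefOn C A) :
    combine i Q (fun j : {j : Fin n // j ≠ i} => P j) = Function.update P i Q := by
  funext l
  by_cases hl : l = i
  · subst hl; simp [combine]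
  · simp [combine, hl]

end ExpectedUtility

section StrategyProofness

open Filter Topology

variable {C : Type} [Fintype C] [DecidableEq C] {n : ℕ} {v : (Fin n → Pref C) → C → ℝ}

theorem EU_indicator_le (hsp : WeaklySP v) {U : Finset C} {Q : Pref C} (hU : IsPrefixSet U Q)
    {φ : Pref C → ℝ} (hφ : IsBelief φ) (i : Fin n) (Q' : Pref C) :
    EU v (fun z => if z ∈ U then 1 else 0) φ i Q'
      ≤ EU v (fun z => if z ∈ U then 1 else 0) φ i Q := by
  obtain ⟨k, rfl⟩ := hU
  set f : C → ℝ := fun z => if z ∈ (Q.1.take k).toFinset then 1 else 0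
  set r : C → ℝ := fun z => 1 / ((Q.1.idxOf z : ℝ) + 1)
  -- `f` is only weakly consistent with `Q`; a small multiple of `r` breaks its ties
  have hcomb : ∀ t ∈ Set.Ioo (0 : ℝ) 1,
      (1 - t) * EU v f φ i Q' + t * EU v r φ i Q' ≤ (1 - t) * EU v f φ i Q + t * EU v r φ i Q := by
    rintro t ⟨ht0, ht1⟩
    rw [← EU_linear_comb, ← EU_linear_comb]
    let w : ℕ → ℝ := fun m => (1 - t) * (if m < k then 1 else 0) + t * (1 / ((m : ℝ) + 1))
    have hfw : (fun z => (1 - t) * f z + t * r z) = fun z => w (Q.1.idxOf z) := by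
      funext z
      simp [f, r, w, List.mem_take_iff_idxOf_lt (Q.mem_list z)]
    have hw : StrictAnti w := by
      intro m m' hm
      have h1 : (if m' < k then (1 : ℝ) else 0) ≤ if m < k then 1 else 0 := by
        split_ifs <;> first | omega | norm_num
      have h2 : 1 / ((m' : ℝ) + 1) < 1 / ((m : ℝ) + 1) :=
        one_div_lt_one_div_of_lt (by positivity) (by exact_mod_cast Nat.add_lt_add_right hm 1)
      simp only [w]
      nlinarith
    have hw01 (m : ℕ) : 0 ≤ w m ∧ w m ≤ 1 := by
      have h1 : 1 / ((m : ℝ) + 1) ≤ 1 :=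
        div_le_one_of_le₀ (by linarith [m.cast_nonneg (α := ℝ)]) (by positivity)
      have h2 : 0 < 1 / ((m : ℝ) + 1) := by positivity
      simp only [w]
      split_ifs <;> constructor <;> nlinarith
    rw [hfw]
    exact hsp i Q Q' φ trivial hφ _ (fun z => hw01 _) (fun x _ y _ => hw.lt_iff_gt)
  have hlim (a b : ℝ) : Tendsto (fun t => (1 - t) * a + t * b) (𝓝[>] 0) (𝓝 a) := by
    have : Continuous fun t : ℝ => (1 - t) * a + t * b := by fun_prop
    simpa using (this.tendsto 0).mono_left nhdsWithin_le_nhds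
  exact le_of_tendsto_of_tendsto (hlim _ _) (hlim _ _)
    (eventually_of_mem (Ioo_mem_nhdsGT one_pos) hcomb)

theorem sum_update_eq_of_isPrefixSet (hanon : Anonymous v) (hsp : WeaklySP v) {U : Finset C}
    (P : Fin n → Pref C) (i : Fin n) {Q : Pref C} (hP : IsPrefixSet U (P i))
    (hQ : IsPrefixSet U Q) :
    ∑ z ∈ U, v (Function.update P i Q) z = ∑ z ∈ U, v P z := by
  let g : ({j : Fin n // j ≠ i} → Pref C) → ℝ := fun R =>
    ∑ z ∈ U, v (combine i (P i) R) z - ∑ z ∈ U, v (combine i Q R) z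
  -- `g` has zero expectation under every i.i.d. belief, by strategy-proofness in both directions
  have hg : g (fun j => P j) = 0 := by
    refine eq_zero_of_forall_sum_prod_mul_eq_zero g _ (fun σ => ?_) (fun φ hφ0 hφ1 => ?_)
    · simp only [g, combine_comp_perm, hanon (Equiv.Perm.ofSubtype σ)]
    · have h1 := EU_indicator_le hsp hP ⟨hφ0, hφ1⟩ i Q
      have h2 := EU_indicator_le hsp hQ ⟨hφ0, hφ1⟩ i (P i)
      rw [EU_indicator, EU_indicator] at h1 h2
      simp only [g, mul_sub, sum_sub_distrib]
      linarith
  simp only [g, combine_self, combine_eq_update] at hg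
  linarith

theorem sum_eq_of_forall_isPrefixSet (hanon : Anonymous v) (hsp : WeaklySP v) {U : Finset C}
    {P P' : Fin n → Pref C}
    (h : ∀ i, P i = P' i ∨ IsPrefixSet U (P i) ∧ IsPrefixSet U (P' i)) :
    ∑ z ∈ U, v P z = ∑ z ∈ U, v P' z := by
  have hmix (s : Finset (Fin n)) :
      ∑ z ∈ U, v (fun i => if i ∈ s then P' i else P i) z = ∑ z ∈ U, v P z := by
    induction s using Finset.induction_on with
    | empty => simp
    | insert a s ha ih =>
      have hupd : (fun i => if i ∈ insert a s then P' i else P i)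
          = Function.update (fun i => if i ∈ s then P' i else P i) a (P' a) := by
        funext i
        by_cases hia : i = a
        · subst hia; simp
        · simp [hia]
      rw [hupd, ← ih]
      rcases h a with he | ⟨hP, hP'⟩
      · rw [← he, Function.update_eq_self_iff.2 (by simp [ha])]
      · exact sum_update_eq_of_isPrefixSet hanon hsp _ a (by simpa [ha] using hP) hP'
  simpa using (hmix univ).symm

end StrategyProofness

section TwoBlockProfiles

variable {C : Type} [Fintype C] [DecidableEq C] {n : ℕ}
  {v : (Fin n → Pref C) → C → ℝ}

theorem IsVotingRule.sum_compl_eq_iff (hv : IsVotingRule v) (U : Finset C)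
    (P P' : Fin n → Pref C) :
    ∑ z ∈ Uᶜ, v P z = ∑ z ∈ Uᶜ, v P' z ↔ ∑ z ∈ U, v P z = ∑ z ∈ U, v P' z := by
  have h := sum_compl_add_sum U (v P)
  have h' := sum_compl_add_sum U (v P')
  rw [(hv P).2] at h
  rw [(hv P').2] at h'
  constructor <;> intro <;> linarith

theorem IsVotingRule.add_add_sum_eq_one (hv : IsVotingRule v) {Q : Pref C} {x y : C}
    {ρ : List C} (hQ : Q.1 = x :: y :: ρ) (P : Fin n → Pref C) :
    v P x + v P y + ∑ z ∈ ρ.toFinset, v P z = 1 := by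
  have hρ : ρ.Nodup := by
    have := Q.2.1
    rw [hQ] at this
    exact this.of_cons.of_cons
  rw [List.sum_toFinset _ hρ, ← (hv P).2, Q.sum_eq_sum_map, hQ]
  simp [add_assoc]

theorem nonneg_of_superWeakUnanimity [Nonempty C] (hv : IsVotingRule v) {ε : ℝ}
    (hswu : SuperWeakUnanimity v ε) : 0 ≤ ε := by
  obtain ⟨P, -, hP⟩ := hswu (Classical.arbitrary C)
  linarith [single_le_sum (fun z _ => (hv P).1 z) (mem_univ (Classical.arbitrary C)), (hv P).2]

theorem SuperWeakUnanimity.strongUnanimity [Nonempty C] (hanon : Anonymous v)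
    (hsp : WeaklySP v) {ε : ℝ} (hswu : SuperWeakUnanimity v ε) : StrongUnanimity v ε := by
  intro x P hP
  obtain ⟨P₀, hP₀, hv₀⟩ := hswu x
  have h := sum_eq_of_forall_isPrefixSet (U := {x}) hanon hsp (P := P₀) (P' := P) fun i =>
    .inr ⟨hP₀ i ▸ isPrefixSet_top _, hP i ▸ isPrefixSet_top _⟩
  simp only [sum_singleton] at h
  linarith

def twoBlock (Qt Qb : Pref C) (j : ℕ) : Fin n → Pref C :=
  fun i => if (i : ℕ) < j then Qt else Qb

theorem twoBlock_top [Nonempty C] {Qt Qb : Pref C} {x : C} (ht : Qt.top = x) (hb : Qb.top = x)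
    (j : ℕ) (i : Fin n) : (twoBlock Qt Qb j i).top = x := by
  unfold twoBlock
  split_ifs <;> assumption

theorem sum_twoBlock_left_eq (hanon : Anonymous v) (hsp : WeaklySP v) {U : Finset C}
    {Q Q' : Pref C} (hQ : IsPrefixSet U Q) (hQ' : IsPrefixSet U Q') (Qb : Pref C) (j : ℕ) :
    ∑ z ∈ U, v (twoBlock Q Qb j) z = ∑ z ∈ U, v (twoBlock Q' Qb j) z := by
  refine sum_eq_of_forall_isPrefixSet hanon hsp fun i => ?_
  unfold twoBlock
  split_ifs
  exacts [.inr ⟨hQ, hQ'⟩, .inl rfl]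

theorem sum_twoBlock_right_eq (hanon : Anonymous v) (hsp : WeaklySP v) {U : Finset C}
    (Qt : Pref C) {Q Q' : Pref C} (hQ : IsPrefixSet U Q) (hQ' : IsPrefixSet U Q') (j : ℕ) :
    ∑ z ∈ U, v (twoBlock Qt Q j) z = ∑ z ∈ U, v (twoBlock Qt Q' j) z := by
  refine sum_eq_of_forall_isPrefixSet hanon hsp fun i => ?_
  unfold twoBlock
  split_ifs
  exacts [.inl rfl, .inr ⟨hQ, hQ'⟩]

theorem vPrime_eq_twoBlock (hv : IsVotingRule v) (hanon : Anonymous v) (hsp : WeaklySP v)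
    (a : Pref C) {x : C} {Qt Qb : Pref C} {l l' : List C} (ht : Qt.1 = x :: l)
    (hb : Qb.1 = l' ++ [x]) (j : ℕ) :
    vPrime v a x j = v (twoBlock Qt Qb j) x := by
  have htop := sum_twoBlock_left_eq hanon hsp
    (isPrefixSet_singleton_of_eq_cons (rfl : (prefTopList a x).1 = _))
    (isPrefixSet_singleton_of_eq_cons ht) (prefBotList a x) j
  have hbot := sum_twoBlock_right_eq hanon hsp Qt
    (isPrefixSet_compl_singleton_of_eq_append (rfl : (prefBotList a x).1 = _))
    (isPrefixSet_compl_singleton_of_eq_append hb) j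
  rw [hv.sum_compl_eq_iff, sum_singleton, sum_singleton] at hbot
  rw [sum_singleton, sum_singleton] at htop
  exact htop.trans hbot

theorem twoBlock_add_eq (hv : IsVotingRule v) (hanon : Anonymous v) (hsp : WeaklySP v)
    {x y : C} {ρ : List C} {O O' B B' : Pref C} (hO : O.1 = x :: y :: ρ)
    (hO' : O'.1 = y :: x :: ρ) (hB : B.1 = ρ ++ [y, x]) (hB' : B'.1 = ρ ++ [x, y]) (j : ℕ) :
    v (twoBlock O B j) x + v (twoBlock O B j) y
      = v (twoBlock O' B' j) x + v (twoBlock O' B' j) y := by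
  have htop := sum_twoBlock_left_eq hanon hsp (isPrefixSet_of_eq_append (l := [x, y]) hO)
    (List.toFinset_eq_of_perm _ _ (.swap x y []) ▸ isPrefixSet_of_eq_append (l := [y, x]) hO') B j
  rw [← hv.sum_compl_eq_iff, compl_toFinset_of_eq_append (l := [x, y]) hO] at htop
  have hbot := sum_twoBlock_right_eq hanon hsp O' (isPrefixSet_of_eq_append hB)
    (isPrefixSet_of_eq_append hB') j
  linarith [hv.add_add_sum_eq_one hO (twoBlock O B j), hv.add_add_sum_eq_one hO (twoBlock O' B' j)]

theorem twoBlock_apply_le [Nonempty C] (hv : IsVotingRule v) (hanon : Anonymous v)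
    (hsp : WeaklySP v) {ε : ℝ} (hswu : SuperWeakUnanimity v ε) {x y : C} {ρ : List C}
    (hρ : ρ ≠ []) {Qt Qb : Pref C} (ht : Qt.1 = x :: y :: ρ) (hb : Qb.1 = ρ ++ [y, x]) (j : ℕ) :
    v (twoBlock Qt Qb j) y ≤ 2 * ε := by
  obtain ⟨w, ρ', hw⟩ := List.exists_cons_of_ne_nil hρ
  obtain ⟨O3, hO3⟩ := Qt.exists_eq_of_perm (l := ρ ++ [x, y])
    (by rw [ht]; exact List.perm_append_comm)
  obtain ⟨O4, hO4⟩ := Qt.exists_eq_of_perm (l := x :: (ρ ++ [y]))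
    (by rw [ht]; exact (List.perm_append_singleton y ρ).cons x)
  have hsplit := hv.add_add_sum_eq_one ht
  have hρ_nonneg (P : Fin n → Pref C) : 0 ≤ ∑ z ∈ ρ.toFinset, v P z :=
    sum_nonneg fun z _ => (hv P).1 z
  have hy_compl {P P' : Fin n → Pref C}
      (h : ∑ z ∈ {y}ᶜ, v P z = ∑ z ∈ {y}ᶜ, v P' z) : v P y = v P' y := by
    simpa using (hv.sum_compl_eq_iff {y} P P').1 h
  have hyO3 : IsPrefixSet {y}ᶜ O3 :=
    isPrefixSet_compl_singleton_of_eq_append (l := ρ ++ [x]) (by rw [hO3]; simp)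
  have hyO4 : IsPrefixSet {y}ᶜ O4 :=
    isPrefixSet_compl_singleton_of_eq_append (l := x :: ρ) (by rw [hO4]; simp)
  have hy₁ : v (twoBlock Qt O3 j) y ≤ ε := by
    have hx := hswu.strongUnanimity hanon hsp x _
      (twoBlock_top (Pref.top_eq_of_eq_cons ht) (Pref.top_eq_of_eq_cons hO4) j)
    rw [hy_compl (sum_twoBlock_right_eq hanon hsp Qt hyO3 hyO4 j)]
    linarith [hsplit (twoBlock Qt O4 j), hρ_nonneg (twoBlock Qt O4 j)]
  have hy₂ : v (twoBlock O4 Qb j) y ≤ ε := by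
    have hw' := hswu.strongUnanimity hanon hsp w _
      (twoBlock_top (Pref.top_eq_of_eq_cons (by rw [hO3, hw]; rfl))
        (Pref.top_eq_of_eq_cons (by rw [hb, hw]; rfl)) j)
    have hwρ : v (twoBlock O3 Qb j) w ≤ ∑ z ∈ ρ.toFinset, v (twoBlock O3 Qb j) z :=
      single_le_sum (fun z _ => (hv _).1 z) (by simp [hw])
    rw [hy_compl (sum_twoBlock_left_eq hanon hsp hyO4 hyO3 Qb j)]
    linarith [hsplit (twoBlock O3 Qb j), (hv (twoBlock O3 Qb j)).1 x]
  have hx_top (B : Pref C) : v (twoBlock Qt B j) x = v (twoBlock O4 B j) x := by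
    simpa using sum_twoBlock_left_eq hanon hsp (isPrefixSet_singleton_of_eq_cons ht)
      (isPrefixSet_singleton_of_eq_cons hO4) B j
  have hρ_bot (T : Pref C) :
      ∑ z ∈ ρ.toFinset, v (twoBlock T Qb j) z = ∑ z ∈ ρ.toFinset, v (twoBlock T O3 j) z :=
    sum_twoBlock_right_eq hanon hsp T (isPrefixSet_of_eq_append hb)
      (isPrefixSet_of_eq_append hO3) j
  linarith [hx_top Qb, hx_top O3, hρ_bot Qt, hρ_bot O4, hsplit (twoBlock Qt Qb j),
    hsplit (twoBlock O4 O3 j), hsplit (twoBlock Qt O3 j), hsplit (twoBlock O4 Qb j),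
    (hv (twoBlock O4 O3 j)).1 y]

end TwoBlockProfiles

/-- The candidates are close to being anonymous:
`|v'(x,j) - v'(y,j)| ≤ 14mε`. -/
theorem stmt6 {C : Type} [Fintype C] [DecidableEq C] [Nonempty C]
    (hm : 3 ≤ Fintype.card C) {n : ℕ}
    (v : (Fin n → Pref C) → C → ℝ) (ε : ℝ) (hv : IsVotingRule v) (hanon : Anonymous v)
    (hsp : WeaklySP v) (hswu : SuperWeakUnanimity v ε) (a : Pref C) :
    ∀ (x y : C) (j : ℕ), j ≤ n →
      |vPrime v a x j - vPrime v a y j| ≤ 14 * (Fintype.card C : ℝ) * ε := by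
  intro x y j _
  have hε := nonneg_of_superWeakUnanimity hv hswu
  have hm' : (3 : ℝ) ≤ Fintype.card C := by exact_mod_cast hm
  refine le_trans ?_ (show 2 * ε ≤ 14 * (Fintype.card C : ℝ) * ε by nlinarith)
  rcases eq_or_ne x y with rfl | hxy
  · simpa using hε
  obtain ⟨O, ρ, hρ, hO⟩ := exists_pref_eq_cons_cons hm hxy
  obtain ⟨O', hO'⟩ := O.exists_eq_of_perm (l := y :: x :: ρ) (by rw [hO]; exact .swap x y ρ)
  obtain ⟨B, hB⟩ := O.exists_eq_of_perm (l := ρ ++ [y, x])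
    (by rw [hO]; exact List.perm_append_comm.trans (.swap x y ρ))
  obtain ⟨B', hB'⟩ := O.exists_eq_of_perm (l := ρ ++ [x, y])
    (by rw [hO]; exact List.perm_append_comm)
  rw [vPrime_eq_twoBlock hv hanon hsp a hO (l' := ρ ++ [y]) (by rw [hB]; simp) j,
    vPrime_eq_twoBlock hv hanon hsp a hO' (l' := ρ ++ [x]) (by rw [hB']; simp) j, abs_le]
  have hsum := twoBlock_add_eq hv hanon hsp hO hO' hB hB' j
  have hy := twoBlock_apply_le hv hanon hsp hswu hρ hO hB j
  have hx := twoBlock_apply_le hv hanon hsp hswu hρ hO' hB' j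
  constructor <;> linarith [(hv (twoBlock O B j)).1 y, (hv (twoBlock O' B' j)).1 x]
end

section
/- Suppose m ≥ 2. For every α > 0, every n ≥ 1, every voter i ∈ [n], every pair of preference orderings P_i, P_i' ∈ 𝒫 with P_i ≠ P_i', every profile P⃗_{-i} ∈ 𝒫^{n−1}, and every α-coarse utility function u consistent with P_i, the punishing rule satisfies E[u(v_punish(P⃗_{-i},P_i))] ≥ E[u(v_punish(P⃗_{-i},P_i'))] + 2α/(n·m·(m−1)). -/
open Finset

/-!
Under `vPunish`, voter `i`'s report `P` enters the expected utility only through the term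
`-(∑ₓ rank_P(x) · u(x)) / (n · (m choose 2))`; the normalising constant `∑_{ℓ<m} (m - ℓ - 1)` is
`m choose 2`. A false report relabels the ranks by a nontrivial permutation of the candidates. As `u`
is consistent with the true ordering, the rearrangement inequality says truthful ranks minimise
`∑ rank · u`, and coarseness makes the loss at least `α`: composing the permutation with the
transposition that fixes its best-ranked moved candidate gains a rank difference `≥ 1` against a
utility difference `≥ α`, and what remains still cannot beat the truthful ranks.
-/

section Rearrangement

variable {ι : Type*} [Fintype ι] [DecidableEq ι]

theorem sum_comp_perm_mul_sub_sum_comp_mul_swap (f : ι → ℕ) (g : ι → ℝ) (σ : Equiv.Perm ι)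
    {a b : ι} (hab : a ≠ b) :
    ∑ x, (f (σ x) : ℝ) * g x - ∑ x, (f ((σ * Equiv.swap a b) x) : ℝ) * g x
      = ((f (σ a) : ℝ) - f (σ b)) * (g a - g b) := by
  rw [← Finset.sum_sub_distrib, Fintype.sum_eq_add a b hab]
  · simp only [Equiv.Perm.mul_apply, Equiv.swap_apply_left, Equiv.swap_apply_right]
    ring
  · rintro x ⟨hxa, hxb⟩
    simp only [Equiv.Perm.mul_apply, Equiv.swap_apply_of_ne_of_ne hxa hxb, sub_self]

theorem sum_mul_add_le_sum_comp_perm_mul {f : ι → ℕ} (hf : Function.Injective f) {g : ι → ℝ}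
    {α : ℝ} (hα : 0 ≤ α) (hfg : ∀ x y, f x < f y → g y + α ≤ g x)
    {σ : Equiv.Perm ι} (hσ : σ ≠ 1) :
    ∑ x, (f x : ℝ) * g x + α ≤ ∑ x, (f (σ x) : ℝ) * g x := by
  have hanti : Antivary (fun x => (f x : ℝ)) g := fun x y hxy => by
    by_contra! h
    linarith [hfg x y (by exact_mod_cast h)]
  -- Undo `σ` on its moved point `a` of least `f`-value; the rest is the plain rearrangement inequality.
  have hmoved : (Finset.univ.filter fun x => σ x ≠ x).Nonempty := by
    by_contra! h
    exact hσ (Equiv.ext fun x => by simpa using Finset.filter_eq_empty_iff.mp h (Finset.mem_univ x))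
  obtain ⟨a, ha, ha_min⟩ := Finset.exists_min_image _ f hmoved
  simp only [Finset.mem_filter, Finset.mem_univ, true_and] at ha ha_min
  set b := σ.symm a
  have hσb : σ b = a := σ.apply_symm_apply a
  have hba : b ≠ a := fun h => ha (by rw [← h, hσb, h])
  have hfab : f a < f b :=
    (ha_min b (by rwa [hσb, ne_comm])).lt_of_ne fun h => hba (hf h).symm
  have hfσa : f a < f (σ a) :=
    (ha_min (σ a) fun h => ha (σ.injective h)).lt_of_ne fun h => ha (hf h).symm
  have hswap := sum_comp_perm_mul_sub_sum_comp_mul_swap f g σ hba.symm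
  rw [hσb] at hswap
  have hgain : α ≤ ((f (σ a) : ℝ) - f a) * (g a - g b) := by
    have h1 : (1 : ℝ) ≤ (f (σ a) : ℝ) - f a := by
      have : f a + 1 ≤ f (σ a) := hfσa
      exact le_sub_iff_add_le'.mpr (by exact_mod_cast this)
    have h2 : α ≤ g a - g b := by linarith [hfg a b hfab]
    nlinarith
  have hbase := hanti.sum_smul_le_sum_comp_perm_smul (σ := σ * Equiv.swap a b)
  simp only [smul_eq_mul] at hbase
  linarith

end Rearrangement

theorem CoarseUtility.add_le_of_lt {C : Type} {α : ℝ} {u : C → ℝ} (hu : CoarseUtility α u)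
    {x y : C} (hxy : u y < u x) : u y + α ≤ u x := by
  rcases hu x y with h | h
  · linarith
  · rw [abs_of_pos (sub_pos.mpr hxy)] at h
    linarith

theorem sum_range_sub_succ_eq_choose_two (m : ℕ) :
    ∑ ℓ ∈ Finset.range m, ((m : ℝ) - ((ℓ : ℝ) + 1)) = (m.choose 2 : ℝ) := by
  have hgauss : (∑ ℓ ∈ Finset.range m, (ℓ : ℝ)) * 2 = m * (m - 1) := by
    induction m with
    | zero => simp
    | succ k ih => rw [Finset.sum_range_succ, add_mul, ih]; push_cast; ring
  rw [Nat.cast_choose_two, Finset.sum_sub_distrib, Finset.sum_add_distrib]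
  simp only [Finset.sum_const, Finset.card_range, nsmul_eq_mul, mul_one]
  linarith

namespace Pref

variable {C : Type} [Fintype C] [DecidableEq C]

theorem idxOf_injective (P : Pref C) : Function.Injective (P.1.idxOf ·) :=
  fun _ _ h => (List.idxOf_inj (P.mem_list _)).mp h

theorem ext_idxOf {P P' : Pref C} (h : ∀ x, P.1.idxOf x = P'.1.idxOf x) : P = P' := by
  have hlen : P.1.length = P'.1.length := by
    rw [← List.toFinset_card_of_nodup P.2.1, ← List.toFinset_card_of_nodup P'.2.1, P.2.2, P'.2.2]
  refine Subtype.ext (List.ext_getElem hlen fun k hk _ => ?_)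
  have hidx : P'.1.idxOf P.1[k] = k := by
    rw [← h]; exact List.get_idxOf P.2.1 ⟨k, hk⟩
  have hget := List.getElem_idxOf (List.idxOf_lt_length_iff.mpr (P'.mem_list P.1[k]))
  simp only [hidx] at hget
  exact hget.symm

noncomputable def rankEquiv (P : Pref C) : C ≃ Fin (Fintype.card C) :=
  Equiv.ofBijective P.rank <| (Fintype.bijective_iff_injective_and_card _).mpr
    ⟨fun _ _ h => P.idxOf_injective (congrArg Fin.val h), (Fintype.card_fin _).symm⟩

noncomputable def relabel (P P' : Pref C) : Equiv.Perm C :=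
  P'.rankEquiv.trans P.rankEquiv.symm

theorem idxOf_relabel (P P' : Pref C) (x : C) : P.1.idxOf (relabel P P' x) = P'.1.idxOf x :=
  congrArg Fin.val (P.rankEquiv.apply_symm_apply (P'.rankEquiv x))

theorem relabel_ne_one {P P' : Pref C} (h : P' ≠ P) : relabel P P' ≠ 1 := fun h1 =>
  h (ext_idxOf fun x => by rw [← idxOf_relabel P P' x, h1, Equiv.Perm.one_apply])

end Pref

section Punishing

variable {C : Type} [Fintype C] [DecidableEq C]

def Pref.rankWeightedSum (P : Pref C) (u : C → ℝ) : ℝ :=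
  ∑ x, (P.1.idxOf x : ℝ) * u x

theorem sum_vPunish_mul (n : ℕ) (P : Fin n → Pref C) (u : C → ℝ) :
    ∑ x, vPunish n P x * u x
      = ∑ j, (((Fintype.card C : ℝ) - 1) * ∑ x, u x - (P j).rankWeightedSum u)
          / (n * (Fintype.card C).choose 2) := by
  simp only [vPunish, sum_range_sub_succ_eq_choose_two, Pref.rankWeightedSum, Finset.mul_sum,
    Finset.sum_mul, ← Finset.sum_sub_distrib, Finset.sum_div]
  rw [Finset.sum_comm]
  refine Finset.sum_congr rfl fun j _ => Finset.sum_congr rfl fun x _ => ?_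
  ring

theorem sum_vPunish_mul_sub_update (n : ℕ) (Q : Fin n → Pref C) (i : Fin n) (P' : Pref C)
    (u : C → ℝ) :
    ∑ x, vPunish n Q x * u x - ∑ x, vPunish n (Function.update Q i P') x * u x
      = (P'.rankWeightedSum u - (Q i).rankWeightedSum u) / (n * (Fintype.card C).choose 2) := by
  rw [sum_vPunish_mul, sum_vPunish_mul, ← Finset.sum_sub_distrib,
    Fintype.sum_eq_single i fun j hj => by rw [Function.update_of_ne hj, sub_self],
    Function.update_self]
  ring

theorem Pref.rankWeightedSum_add_le {α : ℝ} (hα : 0 ≤ α) {u : C → ℝ} (hu : CoarseUtility α u)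
    {P P' : Pref C} (hcons : ConsistentOn Finset.univ u P) (hne : P' ≠ P) :
    P.rankWeightedSum u + α ≤ P'.rankWeightedSum u := by
  have hgap : ∀ x y, P.1.idxOf x < P.1.idxOf y → u y + α ≤ u x := fun x y hxy =>
    hu.add_le_of_lt ((hcons x (Finset.mem_univ x) y (Finset.mem_univ y)).mpr hxy)
  have := sum_mul_add_le_sum_comp_perm_mul P.idxOf_injective hα hgap (Pref.relabel_ne_one hne)
  simpa only [Pref.rankWeightedSum, Pref.idxOf_relabel] using this

end Punishing

theorem stmt10_general {C : Type} [Fintype C] [DecidableEq C]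
    (α : ℝ) (hα : 0 < α) (n : ℕ) (i : Fin n)
    (Q : Fin n → Pref C) (Pi' : Pref C) (hne : Pi' ≠ Q i)
    (u : C → ℝ) (hcu : CoarseUtility α u)
    (hcons : ConsistentOn Finset.univ u (Q i)) :
    (∑ x : C, vPunish n (Function.update Q i Pi') x * u x)
      + 2 * α / ((n : ℝ) * (Fintype.card C : ℝ) * ((Fintype.card C : ℝ) - 1))
      ≤ ∑ x : C, vPunish n Q x * u x := by
  have hgain := (Q i).rankWeightedSum_add_le hα.le hcu hcons hne
  have hdiff := sum_vPunish_mul_sub_update n Q i Pi' u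
  have hpenalty : 2 * α / ((n : ℝ) * (Fintype.card C : ℝ) * ((Fintype.card C : ℝ) - 1))
      = α / (n * (Fintype.card C).choose 2) := by
    rw [Nat.cast_choose_two, mul_div_assoc', div_div_eq_mul_div, mul_comm α 2, mul_assoc (n : ℝ)]
  have hle : α / (n * (Fintype.card C).choose 2)
      ≤ (Pi'.rankWeightedSum u - (Q i).rankWeightedSum u) / (n * (Fintype.card C).choose 2) :=
    div_le_div_of_nonneg_right (by linarith) (by positivity)
  linarith

/-- The punishing voting rule is strictly strategy-proof: lying costs
at least `2α/(n·m·(m-1))` in (deterministic) expected utility. -/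
theorem stmt10 {C : Type} [Fintype C] [DecidableEq C]
    (hm : 2 ≤ Fintype.card C)
    (α : ℝ) (hα : 0 < α) (n : ℕ) (hn : 1 ≤ n) (i : Fin n)
    (Q : Fin n → Pref C) (Pi' : Pref C) (hne : Pi' ≠ Q i)
    (u : C → ℝ) (hu : Utility01 u) (hcu : CoarseUtility α u)
    (hcons : ConsistentOn Finset.univ u (Q i)) :
    (∑ x : C, vPunish n (Function.update Q i Pi') x * u x)
      + 2 * α / ((n : ℝ) * (Fintype.card C : ℝ) * ((Fintype.card C : ℝ) - 1))
      ≤ ∑ x : C, vPunish n Q x * u x :=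
  stmt10_general α hα n i Q Pi' hne u hcu hcons
end
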